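/- arXiv:2508.12256 — 2 statements merged into one kernel-verified Lean document; each statement's English description precedes it below -/
import Mathlib

section
/- For any linear map E from d×d to n×n matrices and any d×d matrix ρ, the full transpose of the star product satisfies (E ⋆ ρ)^T = Ē ⋆ ρ^T, where E ⋆ ρ = (1/2){ρ ⊗ 1, J[E]} and Ē = T ∘ E ∘ T. -/
open Matrix Kronecker BigOperators

/-- The Jamiołkowski operator `J[E] = Σ_{i,j} E_{ij} ⊗ E(E_{ji})`. -/
noncomputable def jam {d n : ℕ}
    (E : Matrix (Fin d) (Fin d) ℂ →ₗ[ℂ] Matrix (Fin n) (Fin n) ℂ) :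
    Matrix (Fin d × Fin n) (Fin d × Fin n) ℂ :=
  ∑ i : Fin d, ∑ j : Fin d, single i j (1 : ℂ) ⊗ₖ E (single j i (1 : ℂ))

/-- The star product `E ⋆ ρ = (1/2){ρ ⊗ 1, J[E]}`. -/
noncomputable def starProd {d n : ℕ}
    (E : Matrix (Fin d) (Fin d) ℂ →ₗ[ℂ] Matrix (Fin n) (Fin n) ℂ)
    (ρ : Matrix (Fin d) (Fin d) ℂ) : Matrix (Fin d × Fin n) (Fin d × Fin n) ℂ :=
  (1 / 2 : ℂ) • ((ρ ⊗ₖ (1 : Matrix (Fin n) (Fin n) ℂ)) * jam E +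
    jam E * (ρ ⊗ₖ (1 : Matrix (Fin n) (Fin n) ℂ)))

/-- The conjugate map `Ē = T ∘ E ∘ T`, where `T` is the transpose map. -/
noncomputable def conjMap {d n : ℕ}
    (E : Matrix (Fin d) (Fin d) ℂ →ₗ[ℂ] Matrix (Fin n) (Fin n) ℂ) :
    Matrix (Fin d) (Fin d) ℂ →ₗ[ℂ] Matrix (Fin n) (Fin n) ℂ where
  toFun X := (E Xᵀ)ᵀ
  map_add' X Y := by simp [Matrix.transpose_add]
  map_smul' c X := by simp [Matrix.transpose_smul]

theorem conjMap_apply {d n : ℕ}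
    (E : Matrix (Fin d) (Fin d) ℂ →ₗ[ℂ] Matrix (Fin n) (Fin n) ℂ) (X : Matrix (Fin d) (Fin d) ℂ) :
    conjMap E X = (E Xᵀ)ᵀ :=
  rfl

theorem jam_transpose {d n : ℕ}
    (E : Matrix (Fin d) (Fin d) ℂ →ₗ[ℂ] Matrix (Fin n) (Fin n) ℂ) :
    (jam E)ᵀ = jam (conjMap E) := by
  rw [jam, jam, Finset.sum_comm]
  simp only [transpose_sum, ← kroneckerMap_transpose, transpose_single, conjMap_apply]

/-- `(E ⋆ ρ)ᵀ = Ē ⋆ ρᵀ`. -/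
theorem stmt_18 {d n : ℕ}
    (E : Matrix (Fin d) (Fin d) ℂ →ₗ[ℂ] Matrix (Fin n) (Fin n) ℂ)
    (ρ : Matrix (Fin d) (Fin d) ℂ) :
    (starProd E ρ)ᵀ = starProd (conjMap E) ρᵀ := by
  rw [starProd, starProd, transpose_smul, transpose_add, transpose_mul, transpose_mul,
    jam_transpose, ← kroneckerMap_transpose, transpose_one, add_comm]
end

section
/- Any bipartite density matrix ρ_AB with positive semi-definite partial transpose ρ_AB^{T_B} is a dual state; that is, there exists a CPTP map E such that ρ_AB = (1/2){ρ_A ⊗ 1, J[E]} with ρ_A = Tr_B[ρ_AB]. -/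
open Matrix Kronecker ComplexOrder BigOperators

/-- The partial trace over the second tensor factor. -/
noncomputable def trB {d n : ℕ} (X : Matrix (Fin d × Fin n) (Fin d × Fin n) ℂ) :
    Matrix (Fin d) (Fin d) ℂ :=
  Matrix.of fun i j => ∑ k : Fin n, X (i, k) (j, k)

/-- Partial transpose on the second tensor factor. -/
def TB {d n : ℕ} (X : Matrix (Fin d × Fin n) (Fin d × Fin n) ℂ) :
    Matrix (Fin d × Fin n) (Fin d × Fin n) ℂ :=
  Matrix.of fun p q => X (p.1, q.2) (q.1, p.2)

/-- The Choi matrix `C[E] = Σ_{i,j} E_{ij} ⊗ E(E_{ij})`. -/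
noncomputable def choi {d n : ℕ}
    (E : Matrix (Fin d) (Fin d) ℂ →ₗ[ℂ] Matrix (Fin n) (Fin n) ℂ) :
    Matrix (Fin d × Fin n) (Fin d × Fin n) ℂ :=
  ∑ i : Fin d, ∑ j : Fin d, single i j (1 : ℂ) ⊗ₖ E (single i j (1 : ℂ))

/-!
Put `σ = ρ_AB^{T_B}`, positive semidefinite with `Tr_B σ = ρ_A`. Since partial transposition on
`B` commutes with multiplication by `ρ_A ⊗ 1`, it suffices to find a positive semidefinite `C`
with `Tr_B C = 1` solving the Lyapunov equation `(ρ_A ⊗ 1) C + C (ρ_A ⊗ 1) = 2σ`: the map `E` with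
`J[E] = C^{T_B}` then has Choi matrix `Cᵀ` and is trace preserving. In an eigenbasis of `ρ_A`,
with eigenvalues `λ`, take `C_{pq} = 2 σ_{pq} / (λ_p + λ_q)`, the Schur product of `σ` with a
Cauchy matrix; the latter is positive semidefinite because `1 / (a + b) = ∫₀^∞ e^{-at} e^{-bt} dt`.
On the kernel of `ρ_A`, where `σ` vanishes, `C` is completed by the maximally mixed state.
-/

open MeasureTheory Set in
lemma inv_eq_integral_exp_neg_mul {s : ℝ} (hs : 0 < s) :
    s⁻¹ = ∫ t in Ioi 0, Real.exp (-s * t) := by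
  rw [integral_exp_mul_Ioi (neg_neg_of_pos hs)]
  simp

namespace Matrix

variable {ι : Type*} [Fintype ι]

noncomputable def cauchy (μ : ι → ℝ) : Matrix ι ι ℂ :=
  of fun p q => ((μ p + μ q : ℝ) : ℂ)⁻¹

open MeasureTheory Set in
theorem posSemidef_cauchy {μ : ι → ℝ} (hμ : ∀ p, 0 < μ p) : (cauchy μ).PosSemidef := by
  refine .of_dotProduct_mulVec_nonneg ?_ fun x => ?_
  · ext p q
    simp [cauchy, add_comm]
  set e : ι → ι → ℝ → ℂ := fun p q t => star (x p) * x q * Real.exp (-(μ p + μ q) * t)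
  have he : ∀ p q, IntegrableOn (e p q) (Ioi 0) := fun p q =>
    ((integrableOn_exp_mul_Ioi (neg_neg_of_pos (add_pos (hμ p) (hμ q))) 0).ofReal).const_mul _
  set f : ℝ → ℂ := fun t => ∑ p, Real.exp (-μ p * t) * x p
  have hf : ∀ t, ((‖f t‖ ^ 2 : ℝ) : ℂ) = ∑ p, ∑ q, e p q t := by
    intro t
    rw [Complex.ofReal_pow, ← Complex.conj_mul', ← Complex.star_def, star_sum, Finset.sum_mul_sum]
    refine Finset.sum_congr rfl fun p _ => Finset.sum_congr rfl fun q _ => ?_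
    simp only [e, star_mul', Complex.star_def, Complex.conj_ofReal, add_mul, neg_add,
      Real.exp_add]
    push_cast
    ring
  have hquad : star x ⬝ᵥ cauchy μ *ᵥ x = ((∫ t in Ioi 0, ‖f t‖ ^ 2 : ℝ) : ℂ) := by
    rw [← integral_complex_ofReal]
    simp only [hf]
    rw [integral_finsetSum _ fun p _ => integrable_finsetSum _ fun q _ => he p q]
    simp only [dotProduct, mulVec, Finset.mul_sum]
    refine Finset.sum_congr rfl fun p _ => ?_
    rw [integral_finsetSum _ fun q _ => he p q]
    refine Finset.sum_congr rfl fun q _ => ?_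
    rw [integral_const_mul, integral_complex_ofReal,
      ← inv_eq_integral_exp_neg_mul (add_pos (hμ p) (hμ q))]
    simp only [cauchy, of_apply, Complex.ofReal_inv, Pi.star_apply]
    ring
  rw [hquad]
  exact Complex.zero_le_real.2 (setIntegral_nonneg measurableSet_Ioi fun _ _ => sq_nonneg _)

theorem PosSemidef.hadamard_cauchy {μ : ι → ℝ} (hμ : ∀ p, 0 ≤ μ p) {S : Matrix ι ι ℂ}
    (hS : S.PosSemidef) (hker : ∀ p q, μ p = 0 → S p q = 0) : (S ⊙ cauchy μ).PosSemidef := by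
  classical
  -- `S` vanishes off `{μ > 0}`, so the Cauchy kernel may be changed there to a positive one.
  set μ' : ι → ℝ := fun p => if μ p = 0 then 1 else μ p
  have hμ' : ∀ p, 0 < μ' p := fun p => by
    by_cases hp : μ p = 0
    · simp [μ', hp]
    · simpa [μ', hp] using (hμ p).lt_of_ne' hp
  have : S ⊙ cauchy μ = S ⊙ cauchy μ' := by
    ext p q
    by_cases hp : μ p = 0
    · simp [hker p q hp]
    by_cases hq : μ q = 0
    · simp [← hS.isHermitian.apply p q, hker q p hq]
    simp [cauchy, μ', hp, hq]
  rw [this]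
  exact hS.hadamard (posSemidef_cauchy hμ')

theorem diagonal_mul_hadamard_cauchy_add [DecidableEq ι] {μ : ι → ℝ} (hμ : ∀ p, 0 ≤ μ p)
    {S : Matrix ι ι ℂ} (hker : ∀ p q, μ p = 0 → S p q = 0) :
    diagonal (fun p => (μ p : ℂ)) * (S ⊙ cauchy μ)
      + (S ⊙ cauchy μ) * diagonal (fun p => (μ p : ℂ)) = S := by
  ext p q
  simp only [add_apply, diagonal_mul, mul_diagonal, hadamard_apply, cauchy, of_apply]
  by_cases h : μ p + μ q = 0
  · simp [hker p q (by linarith [hμ p, hμ q])]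
  · have h' : ((μ p + μ q : ℝ) : ℂ) ≠ 0 := Complex.ofReal_ne_zero.2 h
    push_cast at h' ⊢
    field_simp

theorem PosSemidef.apply_eq_zero_of_diag_eq_zero {A : Matrix ι ι ℂ} (hA : A.PosSemidef) {i : ι}
    (hi : A i i = 0) (j : ι) : A i j = 0 := by
  classical
  open scoped MatrixOrder in
  obtain ⟨B, rfl⟩ := CStarAlgebra.nonneg_iff_eq_star_mul_self.mp hA.nonneg
  simp only [star_eq_conjTranspose, mul_apply, conjTranspose_apply] at hi
  have hB : ∀ r, B r i = 0 := by
    intro r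
    simpa using (Finset.sum_eq_zero_iff_of_nonneg fun r _ => star_mul_self_nonneg (B r i)).1 hi r
      (Finset.mem_univ r)
  simp [mul_apply, hB]

end Matrix

section PartialTrace

variable {d n : ℕ}

lemma trB_eq_sum_submatrix (X : Matrix (Fin d × Fin n) (Fin d × Fin n) ℂ) :
    trB X = ∑ k, X.submatrix (·, k) (·, k) := by
  ext i j
  simp [trB, Matrix.sum_apply]

theorem Matrix.PosSemidef.trB {X : Matrix (Fin d × Fin n) (Fin d × Fin n) ℂ}
    (hX : X.PosSemidef) : (trB X).PosSemidef := by
  rw [trB_eq_sum_submatrix]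
  exact posSemidef_sum _ fun k _ => hX.submatrix _

lemma trB_add (X Y : Matrix (Fin d × Fin n) (Fin d × Fin n) ℂ) :
    trB (X + Y) = trB X + trB Y := by
  ext i j
  simp [trB, Finset.sum_add_distrib]

lemma trB_smul (c : ℂ) (X : Matrix (Fin d × Fin n) (Fin d × Fin n) ℂ) :
    trB (c • X) = c • trB X := by
  ext i j
  simp [trB, Finset.mul_sum]

lemma trB_kronecker_one_mul_mul (V V' : Matrix (Fin d) (Fin d) ℂ)
    (X : Matrix (Fin d × Fin n) (Fin d × Fin n) ℂ) :
    trB ((V ⊗ₖ (1 : Matrix (Fin n) (Fin n) ℂ)) * X * (V' ⊗ₖ 1)) = V * trB X * V' := by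
  ext i j
  simp [trB, mul_apply, Fintype.sum_prod_type, one_apply, Finset.mul_sum, Finset.sum_mul]
  exact Finset.sum_comm.trans (Finset.sum_congr rfl fun _ _ => Finset.sum_comm)

lemma TB_kronecker_one_mul_add (A : Matrix (Fin d) (Fin d) ℂ)
    (X : Matrix (Fin d × Fin n) (Fin d × Fin n) ℂ) :
    TB ((A ⊗ₖ (1 : Matrix (Fin n) (Fin n) ℂ)) * X + X * (A ⊗ₖ 1))
      = (A ⊗ₖ 1) * TB X + TB X * (A ⊗ₖ 1) := by
  ext ⟨i, k⟩ ⟨j, l⟩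
  simp [TB, mul_apply, Fintype.sum_prod_type, one_apply]

lemma choi_eq_transpose_TB_jam (E : Matrix (Fin d) (Fin d) ℂ →ₗ[ℂ] Matrix (Fin n) (Fin n) ℂ) :
    choi E = (TB (jam E))ᵀ := by
  ext ⟨i, k⟩ ⟨j, l⟩
  simp [choi, jam, TB, Matrix.sum_apply, single_apply, ite_and]

noncomputable def ofJam (M : Matrix (Fin d × Fin n) (Fin d × Fin n) ℂ) :
    Matrix (Fin d) (Fin d) ℂ →ₗ[ℂ] Matrix (Fin n) (Fin n) ℂ where
  toFun X := of fun k l => ∑ a, ∑ b, X b a * M (a, k) (b, l)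
  map_add' X Y := by
    ext k l
    simp [add_mul, Finset.sum_add_distrib]
  map_smul' c X := by
    ext k l
    simp [Finset.mul_sum, mul_assoc]

lemma jam_ofJam (M : Matrix (Fin d × Fin n) (Fin d × Fin n) ℂ) : jam (ofJam M) = M := by
  ext ⟨i, k⟩ ⟨j, l⟩
  simp [jam, ofJam, Matrix.sum_apply, single_apply, ite_and]

lemma trace_ofJam {M : Matrix (Fin d × Fin n) (Fin d × Fin n) ℂ} (hM : trB M = 1)
    (X : Matrix (Fin d) (Fin d) ℂ) : (ofJam M X).trace = X.trace := by
  have hM' : ∀ a b, ∑ k, M (a, k) (b, k) = (1 : Matrix (Fin d) (Fin d) ℂ) a b := fun a b =>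
    congrFun (congrFun hM a) b
  simp only [trace, diag, ofJam, LinearMap.coe_mk, AddHom.coe_mk, of_apply]
  calc ∑ k, ∑ a, ∑ b, X b a * M (a, k) (b, k) = ∑ a, ∑ b, X b a * ∑ k, M (a, k) (b, k) := by
        simp only [Finset.mul_sum]
        exact Finset.sum_comm.trans (Finset.sum_congr rfl fun _ _ => Finset.sum_comm)
    _ = ∑ a, X a a := by simp [hM', one_apply]

lemma trB_hadamard_cauchy (X : Matrix (Fin d × Fin n) (Fin d × Fin n) ℂ) (lam : Fin d → ℝ) :
    trB (X ⊙ cauchy (fun p : Fin d × Fin n => lam p.1)) = trB X ⊙ cauchy lam := by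
  ext i j
  simp [trB, cauchy, Finset.sum_mul]

lemma diagonal_kronecker_one (v : Fin d → ℂ) :
    diagonal v ⊗ₖ (1 : Matrix (Fin n) (Fin n) ℂ) = diagonal fun p => v p.1 := by
  rw [← diagonal_one, diagonal_kronecker_diagonal]
  simp

end PartialTrace

theorem exists_posSemidef_lyapunov_of_trB_eq_diagonal {d n : ℕ} (hn : n ≠ 0)
    {σ : Matrix (Fin d × Fin n) (Fin d × Fin n) ℂ} (hσ : σ.PosSemidef) {lam : Fin d → ℝ}
    (hlam : ∀ a, 0 ≤ lam a) (htr : trB σ = diagonal fun a => (lam a : ℂ)) :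
    ∃ C, C.PosSemidef ∧ trB C = 1 ∧
      (diagonal (fun a => (lam a : ℂ)) ⊗ₖ (1 : Matrix (Fin n) (Fin n) ℂ)) * C
        + C * (diagonal (fun a => (lam a : ℂ)) ⊗ₖ 1) = (2 : ℂ) • σ := by
  set μ : Fin d × Fin n → ℝ := fun p => lam p.1
  have hker : ∀ p q, μ p = 0 → σ p q = 0 := by
    rintro ⟨a, k⟩ q ha
    refine hσ.apply_eq_zero_of_diag_eq_zero ?_ q
    have hsum : ∑ k, σ (a, k) (a, k) = 0 := by
      simpa [trB, μ, ha] using congrFun (congrFun htr a) a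
    exact (Finset.sum_eq_zero_iff_of_nonneg fun k _ => hσ.diag_nonneg).1 hsum k
      (Finset.mem_univ k)
  set P : Matrix (Fin d × Fin n) (Fin d × Fin n) ℂ :=
    diagonal fun p => if lam p.1 = 0 then (n : ℂ)⁻¹ else 0
  have hPlyap : diagonal (fun p => (μ p : ℂ)) * P + P * diagonal (fun p => (μ p : ℂ)) = 0 := by
    ext p q
    by_cases h : lam p.1 = 0 <;> simp [P, μ, diagonal_apply, h]
  refine ⟨(2 : ℂ) • (σ ⊙ cauchy μ) + P, ?_, ?_, ?_⟩
  · have hP : P.PosSemidef := PosSemidef.diagonal fun p => by split_ifs <;> simp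
    have hK := hσ.hadamard_cauchy (μ := μ) (fun p => hlam p.1) hker
    exact (hK.smul (a := (2 : ℂ)) (by norm_num)).add hP
  · rw [trB_add, trB_smul, trB_hadamard_cauchy, htr]
    ext a b
    by_cases hab : a = b
    · subst hab
      by_cases ha : lam a = 0
      · simp [trB, P, cauchy, ha, hn]
      · simp [trB, P, cauchy, ha]
        field_simp
        norm_num
    · simp [trB, P, cauchy, hab]
  · rw [diagonal_kronecker_one]
    calc _ = (2 : ℂ) • (diagonal (fun p => (μ p : ℂ)) * (σ ⊙ cauchy μ)
              + (σ ⊙ cauchy μ) * diagonal (fun p => (μ p : ℂ)))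
            + (diagonal (fun p => (μ p : ℂ)) * P + P * diagonal (fun p => (μ p : ℂ))) := by
          simp only [Matrix.mul_add, Matrix.add_mul, Matrix.mul_smul, Matrix.smul_mul, smul_add]
          abel
      _ = (2 : ℂ) • σ := by
          rw [diagonal_mul_hadamard_cauchy_add (μ := μ) (fun p => hlam p.1) hker, hPlyap,
            add_zero]

open Unitary in
theorem exists_posSemidef_lyapunov {d n : ℕ} (hn : n ≠ 0)
    {σ : Matrix (Fin d × Fin n) (Fin d × Fin n) ℂ} (hσ : σ.PosSemidef) :
    ∃ C, C.PosSemidef ∧ trB C = 1 ∧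
      (trB σ ⊗ₖ (1 : Matrix (Fin n) (Fin n) ℂ)) * C + C * (trB σ ⊗ₖ 1) = (2 : ℂ) • σ := by
  have hA := hσ.trB
  have hAh := hA.isHermitian
  set D : Matrix (Fin d) (Fin d) ℂ := diagonal fun a => (hAh.eigenvalues a : ℂ)
  obtain ⟨U, hUA, hAU⟩ : ∃ U : unitary (Matrix (Fin d) (Fin d) ℂ),
      star (U : Matrix (Fin d) (Fin d) ℂ) * trB σ * U = D ∧
        trB σ = (U : Matrix (Fin d) (Fin d) ℂ) * D * star (U : Matrix (Fin d) (Fin d) ℂ) :=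
    ⟨hAh.eigenvectorUnitary, by simpa [D, Function.comp_def] using
      hAh.conjStarAlgAut_star_eigenvectorUnitary, by simpa [D, Function.comp_def] using
      hAh.spectral_theorem⟩
  let W : unitary (Matrix (Fin d × Fin n) (Fin d × Fin n) ℂ) :=
    ⟨(U : Matrix (Fin d) (Fin d) ℂ) ⊗ₖ 1, kronecker_mem_unitary U.2 (one_mem _)⟩
  have hW : (W : Matrix (Fin d × Fin n) (Fin d × Fin n) ℂ) = U ⊗ₖ 1 := rfl
  have hWstar : (star W : Matrix (Fin d × Fin n) (Fin d × Fin n) ℂ)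
      = star (U : Matrix (Fin d) (Fin d) ℂ) ⊗ₖ 1 := by
    simp [hW, star_eq_conjTranspose, conjTranspose_kronecker]
  let Φ := conjStarAlgAut ℂ _ W
  have hσ' : (Φ.symm σ).PosSemidef := by
    rw [conjStarAlgAut_symm_apply, star_eq_conjTranspose]
    exact hσ.conjTranspose_mul_mul_same _
  have htr' : trB (Φ.symm σ) = D := by
    rw [conjStarAlgAut_symm_apply, hWstar, hW, trB_kronecker_one_mul_mul, hUA]
  obtain ⟨C, hC, hCtr, hClyap⟩ :=
    exists_posSemidef_lyapunov_of_trB_eq_diagonal hn hσ' (fun a => hA.eigenvalues_nonneg a) htr'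
  refine ⟨Φ C, ?_, ?_, ?_⟩
  · rw [conjStarAlgAut_apply, star_eq_conjTranspose]
    exact hC.mul_mul_conjTranspose_same _
  · rw [conjStarAlgAut_apply, hW, hWstar, trB_kronecker_one_mul_mul, hCtr, Matrix.mul_one,
      mul_star_self_of_mem U.2]
  · have hΦD : trB σ ⊗ₖ (1 : Matrix (Fin n) (Fin n) ℂ) = Φ (D ⊗ₖ 1) := by
      rw [conjStarAlgAut_apply, hW, hWstar, ← mul_kronecker_mul, ← mul_kronecker_mul, ← hAU]
      simp
    rw [hΦD, ← map_mul, ← map_mul, ← map_add, hClyap, map_smul, StarAlgEquiv.apply_symm_apply]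

theorem stmt_19_general {d n : ℕ} (ρAB : Matrix (Fin d × Fin n) (Fin d × Fin n) ℂ)
    (htr : ρAB.trace = 1)
    (hPPT : (TB ρAB).PosSemidef) :
    ∃ E : Matrix (Fin d) (Fin d) ℂ →ₗ[ℂ] Matrix (Fin n) (Fin n) ℂ,
      (choi E).PosSemidef ∧
      (∀ X : Matrix (Fin d) (Fin d) ℂ, (E X).trace = X.trace) ∧
      ρAB = (1 / 2 : ℂ) •
        ((trB ρAB ⊗ₖ (1 : Matrix (Fin n) (Fin n) ℂ)) * jam E +
          jam E * (trB ρAB ⊗ₖ (1 : Matrix (Fin n) (Fin n) ℂ))) := by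
  have hn : n ≠ 0 := by
    rintro rfl
    simp [trace] at htr
  obtain ⟨C, hC, hCtr, hlyap⟩ := exists_posSemidef_lyapunov hn hPPT
  refine ⟨ofJam (TB C), ?_, trace_ofJam hCtr, ?_⟩
  · rw [choi_eq_transpose_TB_jam, jam_ofJam]
    exact hC.transpose
  · rw [jam_ofJam, ← TB_kronecker_one_mul_add]
    -- `TB` is an involution and `trB ∘ TB = trB`, both definitionally
    change (trB ρAB ⊗ₖ (1 : Matrix (Fin n) (Fin n) ℂ)) * C + C * (trB ρAB ⊗ₖ 1)
      = (2 : ℂ) • TB ρAB at hlyap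
    rw [hlyap]
    change ρAB = (1 / 2 : ℂ) • (2 : ℂ) • ρAB
    rw [smul_smul]
    norm_num

/-- Any bipartite density matrix `ρ_AB` with positive semi-definite partial transpose
`ρ_AB^{T_B}` is a dual state: there exists a CPTP map `E` such that
`ρ_AB = (1/2){ρ_A ⊗ 1, J[E]}` with `ρ_A = Tr_B[ρ_AB]`. -/
theorem stmt_19 {d n : ℕ} (ρAB : Matrix (Fin d × Fin n) (Fin d × Fin n) ℂ)
    (hρ : ρAB.PosSemidef) (htr : ρAB.trace = 1)
    (hPPT : (TB ρAB).PosSemidef) :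
    ∃ E : Matrix (Fin d) (Fin d) ℂ →ₗ[ℂ] Matrix (Fin n) (Fin n) ℂ,
      (choi E).PosSemidef ∧
      (∀ X : Matrix (Fin d) (Fin d) ℂ, (E X).trace = X.trace) ∧
      ρAB = (1 / 2 : ℂ) •
        ((trB ρAB ⊗ₖ (1 : Matrix (Fin n) (Fin n) ℂ)) * jam E +
          jam E * (trB ρAB ⊗ₖ (1 : Matrix (Fin n) (Fin n) ℂ))) :=
  stmt_19_general ρAB htr hPPT
end
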